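/- Let g be a positive integer, let q be a real number with q > 1, and let μ : Fin (2g) → ℂ satisfy ‖μ i‖^2 = q for every i and ∏_{i} μ i = q^g. Let α : ℝ → ℂ be a smooth function with compact support and set Φ(s) = ∫_ℝ e^{t·s} α(t) dt for s ∈ ℂ. Then for every subset S of Fin (2g) the series ∑_{ν ∈ ℤ} Φ((Log(∏_{i ∈ S} μ i) + 2πν·i)/log q) converges absolutely (Log denoting the principal complex logarithm), and the following 'explicit formula' holds: ∑_{S ⊆ Fin (2g)} (−1)^{card S} ∑_{ν ∈ ℤ} Φ((Log(∏_{i ∈ S} μ i) + 2πν·i)/log q) = (log q)·∑_{n = 1}^∞ (∏_{i} (1 − (μ i)^n))·α(n·log q) + (log q)·∑_{n = 1}^∞ q^{−g·n}·(∏_{i} (1 − (μ i)^n))·α(−n·log q). -/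

import Mathlib

open MeasureTheory Complex Real

open scoped FourierTransform

lemma hcs_iteratedDeriv {f : ℝ → ℂ} (h : HasCompactSupport f) (n : ℕ) :
    HasCompactSupport (iteratedDeriv n f) := by
  induction n with
  | zero => simpa [iteratedDeriv_zero]
  | succ n ih => rw [iteratedDeriv_succ]; exact ih.deriv

lemma fourier_decay {f : ℝ → ℂ} (hf : ContDiff ℝ (⊤ : ℕ∞) f) (hs : HasCompactSupport f) :
    (𝓕 f) =O[Filter.cocompact ℝ] fun x : ℝ => |x| ^ (-2 : ℝ) := by
  have hint : ∀ n : ℕ, (n : ℕ∞) ≤ 2 → Integrable (iteratedDeriv n f) := fun n _ =>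
    (hf.continuous_iteratedDeriv n (by exact_mod_cast le_top)).integrable_of_hasCompactSupport
      (hcs_iteratedDeriv hs n)
  have hkey := Real.fourier_iteratedDeriv (N := 2) (n := 2) (hf.of_le (by exact_mod_cast le_top)) hint le_rfl
  set C : ℝ := ∫ x : ℝ, ‖iteratedDeriv 2 f x‖ with hC
  have hbound : ∀ x : ℝ, ‖(2 * ↑π * I * ↑x) ^ 2 • 𝓕 f x‖ ≤ C := by
    intro x
    rw [← congrFun hkey x]
    exact VectorFourier.norm_fourierIntegral_le_integral_norm _ _ _ _ _
  rw [Asymptotics.isBigO_iff]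
  refine ⟨C / (2 * π) ^ 2, ?_⟩
  have hev : ∀ᶠ x : ℝ in Filter.cocompact ℝ, 1 ≤ |x| := by
    rw [cocompact_eq_atBot_atTop]
    exact Filter.eventually_sup.2 ⟨(Filter.eventually_le_atBot (-1)).mono fun x hx => by
      rw [_root_.abs_of_nonpos (by linarith)]; linarith,
      (Filter.eventually_ge_atTop 1).mono fun x hx => by rw [_root_.abs_of_nonneg (by linarith)]; linarith⟩
  filter_upwards [hev] with x hx
  have hx2 : (1:ℝ) ≤ x ^ 2 := by nlinarith [_root_.sq_abs x]
  have h2 : ‖(2 * (π:ℂ) * I * ↑x) ^ 2‖ = (2 * π) ^ 2 * x ^ 2 := by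
    rw [norm_pow, show (2 * (π:ℂ) * I * ↑x) = ((2 * π * x : ℝ) : ℂ) * I by push_cast; ring,
      norm_mul, Complex.norm_I, mul_one, Complex.norm_real, Real.norm_eq_abs]
    rw [← _root_.abs_pow]
    rw [_root_.abs_of_nonneg (by positivity : (0:ℝ) ≤ (2 * π * x)^2)]
    ring
  have hb2 : (2 * π) ^ 2 * x ^ 2 * ‖𝓕 f x‖ ≤ C := by
    have := hbound x
    rwa [norm_smul, h2] at this
  have hrw : ‖|x| ^ (-2 : ℝ)‖ = (x ^ 2)⁻¹ := by
    rw [Real.norm_eq_abs, _root_.abs_of_nonneg (Real.rpow_nonneg (abs_nonneg x) _),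
      Real.rpow_neg (abs_nonneg x), show ((2:ℝ)) = ((2:ℕ):ℝ) by norm_num,
      Real.rpow_natCast, _root_.sq_abs]
  rw [hrw, show C / (2 * π) ^ 2 * (x ^ 2)⁻¹ = C / ((2 * π) ^ 2 * x ^ 2) by field_simp,
    le_div_iff₀ (by positivity)]
  linarith [hb2]

lemma cps_isBigO {f : ℝ → ℂ} (hs : HasCompactSupport f) :
    f =O[Filter.cocompact ℝ] fun x : ℝ => |x| ^ (-2 : ℝ) := by
  rw [Asymptotics.isBigO_iff]
  refine ⟨0, ?_⟩
  have hmem : (tsupport f)ᶜ ∈ Filter.cocompact ℝ := Filter.mem_cocompact.2 ⟨tsupport f, hs, subset_rfl⟩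
  filter_upwards [hmem] with x hx
  rw [image_eq_zero_of_notMem_tsupport hx]
  simp

lemma poisson_cps {f : ℝ → ℂ} (hf : ContDiff ℝ (⊤ : ℕ∞) f) (hs : HasCompactSupport f) :
    Summable (fun n : ℤ => ‖𝓕 f n‖) ∧ ∑' n : ℤ, f n = ∑' n : ℤ, 𝓕 f n := by
  have hFO := fourier_decay hf hs
  have hsum : Summable (fun n : ℤ => ‖𝓕 f n‖) :=
    summable_of_isBigO (Real.summable_abs_int_rpow one_lt_two)
      ((hFO.norm_left).comp_tendsto Int.tendsto_coe_cofinite)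
  refine ⟨hsum, ?_⟩
  have := Real.tsum_eq_tsum_fourier_of_rpow_decay hf.continuous one_lt_two
    (cps_isBigO hs) hFO 0
  simpa using this

lemma tsum_phi_eq {α : ℝ → ℂ} (hα : ContDiff ℝ (⊤ : ℕ∞) α) (hsupp : HasCompactSupport α)
    {Φ : ℂ → ℂ} (hΦ : ∀ s : ℂ, Φ s = ∫ t : ℝ, Complex.exp (t * s) * α t)
    {L : ℝ} (hL : 0 < L) {z : ℂ} (hz : z ≠ 0) :
    Summable (fun ν : ℤ => ‖Φ ((Complex.log z + 2 * Real.pi * ν * Complex.I) / L)‖) ∧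
    ∑' ν : ℤ, Φ ((Complex.log z + 2 * Real.pi * ν * Complex.I) / L)
      = L * ∑' n : ℤ, z ^ n * α (n * L) := by
  have hL0 : (L : ℂ) ≠ 0 := Complex.ofReal_ne_zero.2 hL.ne'
  set f : ℝ → ℂ := fun u => Complex.exp (u * Complex.log z) * α (L * u) with hf
  have hfc : ContDiff ℝ (⊤ : ℕ∞) f := by
    apply ContDiff.mul
    · exact Complex.contDiff_exp.comp (Complex.ofRealCLM.contDiff.mul contDiff_const)
    · exact hα.comp (contDiff_const.mul contDiff_id)
  have hfs : HasCompactSupport f := by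
    have h1 : HasCompactSupport (fun u : ℝ => α (L * u)) :=
      hsupp.comp_isClosedEmbedding (Homeomorph.mulLeft₀ L hL.ne').isClosedEmbedding
    exact h1.mul_left
  have key1 : ∀ ν : ℤ, Φ ((Complex.log z + 2 * Real.pi * ν * Complex.I) / L)
      = L * 𝓕 f (-(ν : ℝ)) := by
    intro ν
    rw [hΦ, Real.fourier_real_eq_integral_exp_smul]
    set s : ℂ := (Complex.log z + 2 * Real.pi * ν * Complex.I) / L with hs
    have hG : ∀ u : ℝ, Complex.exp ((L * u : ℝ) * s) * α (L * u)
        = Complex.exp ((-2 * π * u * (-(ν : ℝ)) : ℝ) * Complex.I) • f u := by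
      intro u
      rw [smul_eq_mul, hf]
      rw [← mul_assoc, ← Complex.exp_add]
      congr 2
      rw [hs]
      field_simp
      push_cast
      ring
    have hcv := Measure.integral_comp_mul_left
      (fun t : ℝ => Complex.exp (t * s) * α t) L
    simp only [hG] at hcv
    rw [abs_of_pos (by positivity : (0:ℝ) < L⁻¹)] at hcv
    calc (∫ t : ℝ, Complex.exp (t * s) * α t)
        = (L : ℝ) • (L⁻¹ • ∫ t : ℝ, Complex.exp (t * s) * α t) := by
          rw [smul_smul, mul_inv_cancel₀ hL.ne', one_smul]
      _ = (L : ℝ) • ∫ u : ℝ, Complex.exp ((-2 * π * u * (-(ν : ℝ)) : ℝ) * Complex.I) • f u := by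
          rw [← hcv]
      _ = L * ∫ u : ℝ, Complex.exp ((-2 * π * u * (-(ν : ℝ)) : ℝ) * Complex.I) • f u := by
          rw [Complex.real_smul]
  have hP := poisson_cps hfc hfs
  constructor
  · have h1 : Summable ((fun n : ℤ => ‖𝓕 f (n : ℝ)‖) ∘ (Equiv.neg ℤ)) :=
      (Equiv.neg ℤ).summable_iff.2 hP.1
    refine ((h1.mul_left ‖(L : ℂ)‖).congr fun ν => ?_)
    rw [key1 ν, norm_mul]
    have : ((fun n : ℤ => ‖𝓕 f (n : ℝ)‖) ∘ ⇑(Equiv.neg ℤ)) ν = ‖𝓕 f (-(ν : ℝ))‖ := by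
      simp [Function.comp, Equiv.neg_apply]
    rw [this]
  · calc ∑' ν : ℤ, Φ ((Complex.log z + 2 * Real.pi * ν * Complex.I) / L)
        = ∑' ν : ℤ, (L : ℂ) * 𝓕 f (-(ν : ℝ)) := tsum_congr key1
      _ = (L : ℂ) * ∑' ν : ℤ, 𝓕 f (-(ν : ℝ)) := tsum_mul_left
      _ = (L : ℂ) * ∑' n : ℤ, 𝓕 f (n : ℝ) := by
          congr 1
          have : ∀ ν : ℤ, 𝓕 f (-(ν : ℝ)) = (fun n : ℤ => 𝓕 f (n : ℝ)) ((Equiv.neg ℤ) ν) := by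
            intro ν; simp
          rw [tsum_congr this]
          exact (Equiv.neg ℤ).tsum_eq (fun n : ℤ => 𝓕 f (n : ℝ))
      _ = (L : ℂ) * ∑' n : ℤ, f n := by rw [← hP.2]
      _ = (L : ℂ) * ∑' n : ℤ, z ^ n * α (n * L) := by
          congr 1
          refine tsum_congr fun n => ?_
          rw [hf]
          simp only []
          rw [show ((n : ℝ) : ℂ) = (n : ℂ) by push_cast; ring, Complex.exp_int_mul,
            Complex.exp_log hz, mul_comm L (n : ℝ)]

lemma sum_neg_one_pow_prod {ι : Type*} [Fintype ι] [DecidableEq ι] (w : ι → ℂ) :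
    ∑ S : Finset ι, (-1 : ℂ) ^ S.card * ∏ i ∈ S, w i = ∏ i, (1 - w i) := by
  have h1 : ∀ i ∈ Finset.univ (α := ι), (1 : ℂ) - w i = -w i + 1 := fun i _ => by ring
  rw [Finset.prod_congr rfl h1, Finset.prod_add, Finset.powerset_univ]
  refine Finset.sum_congr rfl fun S _ => ?_
  rw [Finset.prod_const_one, mul_one, ← Finset.prod_const (-1 : ℂ), ← Finset.prod_mul_distrib]
  exact Finset.prod_congr rfl fun i _ => by ring

/-- the "explicit formula" for the zeta function of a `g`-dimensional ordinary
abelian variety over `𝔽_q`, stated analytically.  The `μ i` are the Frobenius eigenvalues,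
with `‖μ i‖² = q` and `∏ μ i = q^g`.  For every subset `S` of the indices the series over the
zeros `(Log ∏_{i∈S} μ i + 2πνi)/log q` of `P_{#S}(q^{-s})` converges absolutely, and the
alternating sum over all `S` equals the closed-point side of the explicit formula. -/
theorem explicit_formula_ordinary_abelian_variety
    (g : ℕ) (hg : 0 < g) (q : ℝ) (hq : 1 < q)
    (μ : Fin (2 * g) → ℂ) (hμ : ∀ i, ‖μ i‖ ^ 2 = q) (hdet : ∏ i, μ i = (q : ℂ) ^ g)
    (α : ℝ → ℂ) (hα : ContDiff ℝ (⊤ : ℕ∞) α) (hsupp : HasCompactSupport α)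
    (Φ : ℂ → ℂ) (hΦ : ∀ s : ℂ, Φ s = ∫ t : ℝ, Complex.exp (t * s) * α t) :
    (∀ S : Finset (Fin (2 * g)), Summable fun ν : ℤ =>
        ‖Φ ((Complex.log (∏ i ∈ S, μ i) + 2 * Real.pi * ν * Complex.I) / Real.log q)‖) ∧
    ∑ S : Finset (Fin (2 * g)), (-1 : ℂ) ^ S.card *
        ∑' ν : ℤ, Φ ((Complex.log (∏ i ∈ S, μ i) + 2 * Real.pi * ν * Complex.I) / Real.log q)
      = Real.log q * ∑' n : ℕ, (∏ i, (1 - μ i ^ (n + 1))) * α ((n + 1) * Real.log q)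
        + Real.log q * ∑' n : ℕ, ((q : ℂ) ^ (g * (n + 1)))⁻¹ *
            (∏ i, (1 - μ i ^ (n + 1))) * α (-((n + 1) * Real.log q)) := by
  have hL : 0 < Real.log q := Real.log_pos hq
  set L := Real.log q with hLdef
  have hμ0 : ∀ i, μ i ≠ 0 := by
    intro i h
    have h2 := hμ i
    rw [h] at h2
    simp at h2
    nlinarith
  have hz : ∀ S : Finset (Fin (2 * g)), (∏ i ∈ S, μ i) ≠ 0 :=
    fun S => Finset.prod_ne_zero_iff.2 fun i _ => hμ0 i
  have hkey := fun S : Finset (Fin (2 * g)) => tsum_phi_eq hα hsupp hΦ hL (hz S)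
  refine ⟨fun S => (hkey S).1, ?_⟩
  -- support bound
  obtain ⟨M, hM⟩ := hsupp.isBounded.subset_closedBall 0
  have hα0 : ∀ x : ℝ, M < |x| → α x = 0 := by
    intro x hx
    by_contra h
    have hxm : x ∈ tsupport α := subset_tsupport α (by simpa [Function.mem_support] using h)
    have := hM hxm
    rw [Metric.mem_closedBall, Real.dist_eq, sub_zero] at this
    linarith
  set N : ℕ := ⌈M / L⌉₊ with hN
  have hNz : ∀ n : ℤ, (N : ℤ) < |n| → α ((n : ℝ) * L) = 0 := by
    intro n hn
    apply hα0
    rw [abs_mul, _root_.abs_of_pos hL]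
    have h1 : (M / L) < |(n : ℝ)| := by
      refine lt_of_le_of_lt (Nat.le_ceil _) ?_
      have : ((N : ℤ) : ℝ) < |(n : ℝ)| := by
        rw [← Int.cast_abs]
        exact_mod_cast hn
      exact_mod_cast this
    calc M = (M / L) * L := by field_simp
      _ < |(n : ℝ)| * L := mul_lt_mul_of_pos_right h1 hL
  have hsummableZ : ∀ c : ℤ → ℂ, Summable (fun n : ℤ => c n * α ((n : ℝ) * L)) := by
    intro c
    apply summable_of_ne_finset_zero (s := Finset.Icc (-(N : ℤ)) (N : ℤ))
    intro n hn
    rw [Finset.mem_Icc] at hn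
    push_neg at hn
    have habs : (N : ℤ) < |n| := by
      rcases le_or_gt (-(N : ℤ)) n with h | h
      · exact lt_of_lt_of_le (hn h) (le_abs_self n)
      · exact lt_of_lt_of_le (by linarith) (neg_le_abs n)
    rw [hNz n habs, mul_zero]
  set h : ℤ → ℂ := fun n => (∏ i, (1 - μ i ^ n)) * α ((n : ℝ) * L) with hh
  -- LHS equals L * tsum over ℤ of h
  have hLHS : ∑ S : Finset (Fin (2 * g)), (-1 : ℂ) ^ S.card *
        ∑' ν : ℤ, Φ ((Complex.log (∏ i ∈ S, μ i) + 2 * Real.pi * ν * Complex.I) / L)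
      = (L : ℂ) * ∑' n : ℤ, h n := by
    have step1 : ∀ S : Finset (Fin (2 * g)), (-1 : ℂ) ^ S.card *
          ∑' ν : ℤ, Φ ((Complex.log (∏ i ∈ S, μ i) + 2 * Real.pi * ν * Complex.I) / L)
        = (L : ℂ) * ∑' n : ℤ, (-1 : ℂ) ^ S.card * ((∏ i ∈ S, μ i) ^ n * α ((n : ℝ) * L)) := by
      intro S
      rw [(hkey S).2, tsum_mul_left]
      ring
    rw [Finset.sum_congr rfl fun S _ => step1 S, ← Finset.mul_sum]
    congr 1
    have hsumm : ∀ S ∈ (Finset.univ : Finset (Finset (Fin (2 * g)))),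
        Summable (fun n : ℤ => (-1 : ℂ) ^ S.card * ((∏ i ∈ S, μ i) ^ n * α ((n : ℝ) * L))) :=
      fun S _ => (hsummableZ (fun n => (-1 : ℂ) ^ S.card * (∏ i ∈ S, μ i) ^ n)).congr
        (fun n => by ring)
    rw [← Summable.tsum_finsetSum hsumm]
    refine tsum_congr fun n => ?_
    have : ∀ S ∈ (Finset.univ : Finset (Finset (Fin (2 * g)))),
        (-1 : ℂ) ^ S.card * ((∏ i ∈ S, μ i) ^ n * α ((n : ℝ) * L))
          = ((-1 : ℂ) ^ S.card * ∏ i ∈ S, (μ i ^ n)) * α ((n : ℝ) * L) := by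
      intro S _
      rw [Finset.prod_zpow]
      ring
    rw [Finset.sum_congr rfl this, ← Finset.sum_mul, sum_neg_one_pow_prod (fun i => μ i ^ n)]
  rw [hLHS]
  -- split tsum over ℤ
  have hs1 : Summable fun k : ℕ => h ((k : ℤ) + 1) := by
    apply summable_of_ne_finset_zero (s := Finset.range (N + 1))
    intro k hk
    rw [Finset.mem_range, not_lt] at hk
    have : (N : ℤ) < |(k : ℤ) + 1| := by
      rw [_root_.abs_of_nonneg (by positivity : (0:ℤ) ≤ (k : ℤ) + 1)]
      omega
    rw [hh]
    simp only []
    rw [hNz _ this, mul_zero]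
  have hs2 : Summable fun k : ℕ => h (-((k : ℤ) + 1)) := by
    apply summable_of_ne_finset_zero (s := Finset.range (N + 1))
    intro k hk
    rw [Finset.mem_range, not_lt] at hk
    have : (N : ℤ) < |(-((k : ℤ) + 1))| := by
      rw [abs_neg, _root_.abs_of_nonneg (by positivity : (0:ℤ) ≤ (k : ℤ) + 1)]
      omega
    rw [hh]
    simp only []
    rw [hNz _ this, mul_zero]
  rw [tsum_of_add_one_of_neg_add_one hs1 hs2]
  have hzero : h 0 = 0 := by
    rw [hh]
    simp only [Int.cast_zero, zero_mul]
    have : (∏ i, (1 - μ i ^ (0 : ℤ))) = 0 :=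
      Finset.prod_eq_zero (Finset.mem_univ (⟨0, by omega⟩ : Fin (2 * g))) (by simp)
    rw [this, zero_mul]
  rw [hzero]
  -- negative-part product identity
  have hneg : ∀ m : ℕ, (∏ i, (1 - μ i ^ (-(m : ℤ))))
      = ((q : ℂ) ^ (g * m))⁻¹ * ∏ i, (1 - μ i ^ m) := by
    intro m
    have step : ∀ i ∈ (Finset.univ : Finset (Fin (2 * g))),
        (1 : ℂ) - μ i ^ (-(m : ℤ)) = (μ i ^ m)⁻¹ * (μ i ^ m - 1) := by
      intro i _
      have hne : μ i ^ m ≠ 0 := pow_ne_zero m (hμ0 i)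
      rw [zpow_neg, zpow_natCast]
      field_simp
    rw [Finset.prod_congr rfl step, Finset.prod_mul_distrib]
    have e1 : (∏ x : Fin (2 * g), (μ x ^ m)⁻¹) = ((q : ℂ) ^ (g * m))⁻¹ := by
      rw [Finset.prod_inv_distrib, Finset.prod_pow, hdet, ← pow_mul]
    rw [e1]
    congr 1
    have step2 : ∀ i ∈ (Finset.univ : Finset (Fin (2 * g))),
        μ i ^ m - 1 = (-1 : ℂ) * (1 - μ i ^ m) := fun i _ => by ring
    rw [Finset.prod_congr rfl step2, Finset.prod_mul_distrib, Finset.prod_const,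
      Finset.card_univ, Fintype.card_fin, pow_mul, neg_one_sq, one_pow, one_mul]
  -- rewrite positive part
  have hA : ∑' k : ℕ, h ((k : ℤ) + 1)
      = ∑' n : ℕ, (∏ i, (1 - μ i ^ (n + 1))) * α (((n : ℝ) + 1) * L) := by
    refine tsum_congr fun k => ?_
    rw [hh]
    simp only []
    have e1 : ((k : ℤ) + 1) = ((k + 1 : ℕ) : ℤ) := by push_cast; ring
    rw [e1]
    simp only [zpow_natCast]
    have e2 : (((k + 1 : ℕ) : ℤ) : ℝ) * L = ((k : ℝ) + 1) * L := by push_cast; ring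
    rw [e2]
  have hB : ∑' k : ℕ, h (-((k : ℤ) + 1))
      = ∑' n : ℕ, ((q : ℂ) ^ (g * (n + 1)))⁻¹ *
          (∏ i, (1 - μ i ^ (n + 1))) * α (-(((n : ℝ) + 1) * L)) := by
    refine tsum_congr fun k => ?_
    rw [hh]
    simp only []
    have e1 : (-((k : ℤ) + 1)) = (-(((k + 1 : ℕ) : ℤ))) := by push_cast; ring
    rw [e1, hneg (k + 1)]
    have e2 : (((-(((k + 1 : ℕ) : ℤ))) : ℤ) : ℝ) * L = -(((k : ℝ) + 1) * L) := by
      push_cast; ring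
    rw [e2, mul_assoc]
  rw [hA, hB]
  ring
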